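/- Let a, b, p, s and r_1,…,r_s be positive integers with a ≤ b ≤ p - 1 and a + b ≤ p. Then N(K_{r_1,…,r_s}, K_a) + N(K_{r_1,…,r_s}, K_b) ≤ N(K_{r_1,…,r_s}, K_{a+b}). -/

import Mathlib

open SimpleGraph

/-- `N(H, G)`: the number of subgraphs of `G` isomorphic to `H`. -/
noncomputable def copyCountN {α β : Type*} (H : SimpleGraph α) (G : SimpleGraph β) : ℕ :=
  Nat.card {G' : G.Subgraph // Nonempty (G'.coe ≃g H)}

/-- The complete multipartite graph `K_{r 0, …, r (s-1)}` with parts of sizes `r i`. -/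
abbrev KR {s : ℕ} (r : Fin s → ℕ) : SimpleGraph (Σ i : Fin s, Fin (r i)) :=
  completeMultipartiteGraph fun i => Fin (r i)

/-- Adjacency pattern of `G(n,c,k)` on indices: the first `k` indices are dominating and
the first `c+1-k` indices form a clique. -/
def gAdjNat (c k a b : ℕ) : Prop :=
  a < k ∨ b < k ∨ (a < c + 1 - k ∧ b < c + 1 - k)

/-- The graph `G(n,c,k) = K_k ∨ (K_{c+1-2k} + \overline{K_{n-c-1+k}})`: the first `k`
vertices are dominating, the first `c+1-k` vertices form a clique `K_k ∨ K_{c+1-2k}`, and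
the remaining `n-c-1+k` vertices are independent, adjacent exactly to the first `k`. -/
def gGraph (n c k : ℕ) : SimpleGraph (Fin n) where
  Adj v w := v ≠ w ∧ gAdjNat c k v.val w.val
  symm := by constructor; intro v w h; refine ⟨Ne.symm h.1, ?_⟩; unfold gAdjNat at *; tauto
  loopless := by constructor; intro v h; exact h.1 rfl

/-- `g_{r_1,…,r_s}(n,c,k)`: the number of copies of `K_{r_1,…,r_s}` in `G(n,c,k)`. -/
noncomputable def gCount {s : ℕ} (r : Fin s → ℕ) (n c k : ℕ) : ℕ :=
  copyCountN (KR r) (gGraph n c k)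

/-- A graph has circumference `c` if it has a cycle of length `c` and no longer cycle. -/
def HasCircumference {V : Type*} (G : SimpleGraph V) (c : ℕ) : Prop :=
  (∃ (v : V) (w : G.Walk v v), w.IsCycle ∧ w.length = c) ∧
    ∀ (v : V) (w : G.Walk v v), w.IsCycle → w.length ≤ c

/-- A graph has detour order `p` if a longest path has `p` vertices. -/
def HasDetourOrder {V : Type*} (G : SimpleGraph V) (p : ℕ) : Prop :=
  (∃ (u v : V) (w : G.Walk u v), w.IsPath ∧ w.length + 1 = p) ∧
    ∀ (u v : V) (w : G.Walk u v), w.IsPath → w.length + 1 ≤ p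

/-- A graph is 2-connected if it has at least 3 vertices and deleting any single
vertex leaves a connected graph. -/
def TwoConnected {V : Type*} [Fintype V] (G : SimpleGraph V) : Prop :=
  3 ≤ Fintype.card V ∧ ∀ v : V, (G.induce ({v}ᶜ : Set V)).Connected

/-- A graph is traceable if it has a Hamiltonian path. -/
def Traceable {V : Type*} [DecidableEq V] (G : SimpleGraph V) : Prop :=
  ∃ (u v : V) (w : G.Walk u v), w.IsHamiltonian

/-- A graph has matching number `m` if it has a matching with `m` edges and no larger one. -/
def HasMatchingNumber {V : Type*} (G : SimpleGraph V) (m : ℕ) : Prop :=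
  (∃ M : G.Subgraph, M.IsMatching ∧ Nat.card M.edgeSet = m) ∧
    ∀ M : G.Subgraph, M.IsMatching → Nat.card M.edgeSet ≤ m

/-! A copy of `K_{r_1,…,r_s}` in `K_a` and one in `K_b` map to copies in `K_{a+b}` along the
embeddings onto the first `a` and the last `b` vertices. Both maps are injective, and their
images are disjoint because every copy has a vertex and the two embeddings have disjoint ranges. -/

open Function

namespace SimpleGraph

variable {α β γ δ : Type*} {H : SimpleGraph α} {G : SimpleGraph β} {G₁ : SimpleGraph γ}
  {G₂ : SimpleGraph δ}

lemma Subgraph.map_injective {f : G →g G₁} (hf : Injective f) :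
    Injective (Subgraph.map f : G.Subgraph → G₁.Subgraph) := by
  intro A B h
  have hAdj : ∀ u v, A.Adj u v ↔ B.Adj u v := fun u v => by
    simpa [Relation.map_apply, hf.eq_iff] using congrArg (fun X => X.Adj (f u) (f v)) h
  exact Subgraph.ext (Set.image_injective.2 hf (congrArg Subgraph.verts h))
    (funext₂ fun u v => propext (hAdj u v))

namespace Copy

noncomputable def mapIsoSubgraph (f : Copy G G₁)
    (G' : {G' : G.Subgraph // Nonempty (G'.coe ≃g H)}) :
    {G' : G₁.Subgraph // Nonempty (G'.coe ≃g H)} :=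
  ⟨G'.1.map f.toHom, G'.2.map fun e => e.comp (f.isoSubgraphMap G'.1).symm⟩

lemma mapIsoSubgraph_injective (f : Copy G G₁) :
    Injective (f.mapIsoSubgraph (H := H)) :=
  fun _ _ h => Subtype.ext (Subgraph.map_injective f.injective (congrArg Subtype.val h))

end Copy

lemma copyCountN_add_le_of_disjoint_range [Nonempty α] [Finite δ] (f₁ : Copy G G₂)
    (f₂ : Copy G₁ G₂) (hf : Disjoint (Set.range f₁) (Set.range f₂)) :
    copyCountN H G + copyCountN H G₁ ≤ copyCountN H G₂ := by
  have hne : ∀ X Y, f₁.mapIsoSubgraph (H := H) X ≠ f₂.mapIsoSubgraph Y := by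
    rintro ⟨X, ⟨e⟩⟩ Y h
    obtain ⟨v, hv⟩ : X.verts.Nonempty := ⟨_, (e.symm (Classical.arbitrary α)).2⟩
    have hmem : f₁ v ∈ (f₂.mapIsoSubgraph Y).1.verts := h ▸ ⟨v, hv, rfl⟩
    obtain ⟨w, -, hw⟩ := hmem
    exact Set.disjoint_left.1 hf ⟨v, rfl⟩ ⟨w, hw⟩
  have hinj := (f₁.mapIsoSubgraph_injective (H := H)).sumElim f₂.mapIsoSubgraph_injective hne
  have := Finite.of_injective _ (f₁.mapIsoSubgraph_injective (H := H))
  have := Finite.of_injective _ (f₂.mapIsoSubgraph_injective (H := H))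
  exact Nat.card_sum.symm.trans_le (Nat.card_le_card_of_injective _ hinj)

end SimpleGraph

theorem statement_13_general (a b s : ℕ) (r : Fin s → ℕ)
    (hs : 0 < s) (hr : ∀ i, 0 < r i) :
    copyCountN (KR r) (completeGraph (Fin a)) + copyCountN (KR r) (completeGraph (Fin b)) ≤
      copyCountN (KR r) (completeGraph (Fin (a + b))) := by
  have : Nonempty (Σ i : Fin s, Fin (r i)) := ⟨⟨⟨0, hs⟩, ⟨0, hr _⟩⟩⟩
  refine copyCountN_add_le_of_disjoint_range
    (Embedding.completeGraph (Fin.castAddEmb b)).toCopy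
    (Embedding.completeGraph (Fin.natAddEmb a)).toCopy ?_
  refine Set.disjoint_left.2 ?_
  rintro _ ⟨i, rfl⟩ ⟨j, hj⟩
  have : a + j = i := congrArg Fin.val hj
  omega

/-- If `a ≤ b ≤ p - 1` and `a + b ≤ p`, then
`N(K_{r_1,…,r_s}, K_a) + N(K_{r_1,…,r_s}, K_b) ≤ N(K_{r_1,…,r_s}, K_{a+b})`. -/
theorem statement_13 (a b p s : ℕ) (r : Fin s → ℕ)
    (ha : 0 < a) (hb : 0 < b) (hp : 0 < p) (hs : 0 < s) (hr : ∀ i, 0 < r i)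
    (hab : a ≤ b) (hbp : b ≤ p - 1) (habp : a + b ≤ p) :
    copyCountN (KR r) (completeGraph (Fin a)) + copyCountN (KR r) (completeGraph (Fin b)) ≤
      copyCountN (KR r) (completeGraph (Fin (a + b))) :=
  statement_13_general a b s r hs hr
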